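/- Let D be a real sequence of length at least i, and let b_1 < ... < b_M be the borders of D[1..i−1]. Set b_{M+1} = i. Let N be the maximal integer with 2 ≤ N ≤ M+1 such that avg(D[b_{N−1}..i]) < avg(D[b_N..i]), or N = 1 if no such integer exists. Then the borders of D[1..i] are exactly b_1, ..., b_N. -/

import Mathlib

/-!
Let `P k = D 0 + ⋯ + D (k - 1)`. Then `avg(D[a..c])` is the slope of the chord of `P` from `a` to
`c + 1`, so `j` is a border of `D[1..n]` exactly when `(j, P j)` is a vertex of the lower convex
hull of the points `(k, P k)`, `1 ≤ k ≤ n + 1`, other than the last one. Appending `D i` adds the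
point `i + 1`, and the hull is updated as in Andrew's monotone chain. Every point between two
adjacent vertices lies on or above the edge joining them, so the slope into `b N` from any point on
its left is at most that of the edge from `b (N - 1)`; hence `b N` survives iff that edge is less
steep than the chord from `b N` to the new point. A surviving vertex keeps all vertices to its left,
and maximality of `N` cuts off those to its right.
-/

/-- Arithmetic mean of entries `a` through `b` of a (1-indexed) sequence. -/
noncomputable def avg (D : ℕ → ℝ) (a b : ℕ) : ℝ :=
    (∑ i ∈ Finset.Icc a b, D i) / (b - a + 1 : ℕ)

/-- `j` is a border of the prefix `D[1..n]`: there are no indices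
`a < j ≤ b ≤ n` with `avg(D[a..j−1]) ≥ avg(D[j..b])`. -/
def IsBorder (D : ℕ → ℝ) (n j : ℕ) : Prop :=
  1 ≤ j ∧ j ≤ n ∧
    ¬ ∃ a b, 1 ≤ a ∧ a < j ∧ j ≤ b ∧ b ≤ n ∧ avg D a (j - 1) ≥ avg D j b

noncomputable def chordSlope (f : ℕ → ℝ) (m y : ℕ) : ℝ := (f y - f m) / ((y : ℝ) - m)

section ChordSlope

variable {f : ℕ → ℝ} {m k y : ℕ}

theorem sub_mul_chordSlope (h : m < y) : ((y : ℝ) - m) * chordSlope f m y = f y - f m := by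
  have : (m : ℝ) < y := by exact_mod_cast h
  rw [chordSlope, mul_div_cancel₀ _ (sub_ne_zero.mpr this.ne')]

theorem chordSlope_weighted (hmk : m < k) (hky : k < y) :
    ((y : ℝ) - m) * chordSlope f m y
      = ((k : ℝ) - m) * chordSlope f m k + ((y : ℝ) - k) * chordSlope f k y := by
  rw [sub_mul_chordSlope (hmk.trans hky), sub_mul_chordSlope hmk, sub_mul_chordSlope hky]
  ring

theorem chordSlope_lt_iff_left (hmk : m < k) (hky : k < y) :
    chordSlope f m k < chordSlope f k y ↔ chordSlope f m k < chordSlope f m y := by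
  have hw := chordSlope_weighted (f := f) hmk hky
  have h₁ : (0 : ℝ) < (k : ℝ) - m := sub_pos.mpr (by exact_mod_cast hmk)
  have h₂ : (0 : ℝ) < (y : ℝ) - k := sub_pos.mpr (by exact_mod_cast hky)
  constructor <;> intro h <;> nlinarith

theorem chordSlope_lt_iff_right (hmk : m < k) (hky : k < y) :
    chordSlope f m k < chordSlope f k y ↔ chordSlope f m y < chordSlope f k y := by
  have hw := chordSlope_weighted (f := f) hmk hky
  have h₁ : (0 : ℝ) < (k : ℝ) - m := sub_pos.mpr (by exact_mod_cast hmk)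
  have h₂ : (0 : ℝ) < (y : ℝ) - k := sub_pos.mpr (by exact_mod_cast hky)
  constructor <;> intro h <;> nlinarith

theorem lt_chordSlope_of_lt_of_lt {c : ℝ} (hmk : m < k) (hky : k < y)
    (h₁ : c < chordSlope f m k) (h₂ : c < chordSlope f k y) : c < chordSlope f m y := by
  have hw := chordSlope_weighted (f := f) hmk hky
  have hp : (0 : ℝ) < (k : ℝ) - m := sub_pos.mpr (by exact_mod_cast hmk)
  have hq : (0 : ℝ) < (y : ℝ) - k := sub_pos.mpr (by exact_mod_cast hky)
  nlinarith

end ChordSlope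

def IsHullVertex (f : ℕ → ℝ) (lo hi x : ℕ) : Prop :=
  ∀ m y, lo ≤ m → m < x → x < y → y ≤ hi → chordSlope f m x < chordSlope f x y

namespace IsHullVertex

variable {f : ℕ → ℝ} {lo hi x z : ℕ}

theorem of_hi_le (h : hi ≤ x) : IsHullVertex f lo hi x :=
  fun _ _ _ _ hxy hy => absurd (hxy.trans_le hy) h.not_gt

theorem of_le_lo (h : x ≤ lo) : IsHullVertex f lo hi x :=
  fun _ _ hm hmx _ _ => absurd (hmx.trans_le h) hm.not_gt

theorem mono {hi' : ℕ} (h : IsHullVertex f lo hi' x) (hle : hi ≤ hi') : IsHullVertex f lo hi x :=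
  fun m y hm hmx hxy hy => h m y hm hmx hxy (hy.trans hle)

theorem succ (h : IsHullVertex f lo hi x)
    (hnew : ∀ m, lo ≤ m → m < x → chordSlope f m x < chordSlope f x (hi + 1)) :
    IsHullVertex f lo (hi + 1) x := by
  intro m y hm hmx hxy hy
  rcases hy.lt_or_eq with hy | rfl
  · exact h m y hm hmx hxy (Nat.lt_succ_iff.mp hy)
  · exact hnew m hm hmx

theorem of_lt {hi' : ℕ} (hx : IsHullVertex f lo hi x) (hz : IsHullVertex f lo hi' z)
    (hxz : x < z) (hzhi : z ≤ hi) : IsHullVertex f lo hi' x := by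
  intro m y hm hmx hxy hy
  rcases le_or_gt y hi with hyhi | hhiy
  · exact hx m y hm hmx hxy hyhi
  · have hzy : z < y := hzhi.trans_lt hhiy
    calc chordSlope f m x < chordSlope f x z := hx m z hm hmx hxz hzhi
      _ < chordSlope f x y :=
        (chordSlope_lt_iff_left hxz hzy).mp (hz x y (hm.trans hmx.le) hxz hzy hy)

end IsHullVertex

section Edge

variable {f : ℕ → ℝ} {lo hi x z : ℕ}

theorem isHullVertex_of_last_min_chordSlope {m : ℕ} (hx : IsHullVertex f lo hi x)
    (hz : IsHullVertex f lo hi z) (hlox : lo ≤ x) (hxm : x < m) (hmz : m < z) (hzhi : z ≤ hi)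
    (hleft : ∀ q, x < q → q < m → chordSlope f x m ≤ chordSlope f x q)
    (hright : ∀ q, m < q → q ≤ z → chordSlope f x m < chordSlope f x q) :
    IsHullVertex f lo hi m := by
  have hupto : ∀ y, m < y → y ≤ z → chordSlope f x m < chordSlope f m y := fun y hmy hyz =>
    (chordSlope_lt_iff_left hxm hmy).mpr (hright y hmy hyz)
  have hafter : ∀ y, m < y → y ≤ hi → chordSlope f x m < chordSlope f m y := by
    intro y hmy hy
    rcases le_or_gt y z with hyz | hzy
    · exact hupto y hmy hyz
    · exact lt_chordSlope_of_lt_of_lt hmz hzy (hupto z hmz le_rfl)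
        ((hupto z hmz le_rfl).trans (hz m y (hlox.trans hxm.le) hmz hzy hy))
  have hbefore : ∀ p, lo ≤ p → p < m → chordSlope f p m ≤ chordSlope f x m := by
    intro p hp hpm
    rcases lt_trichotomy p x with hpx | rfl | hxp
    · exact ((chordSlope_lt_iff_right hpx hxm).mp (hx p m hp hpx hxm (hmz.le.trans hzhi))).le
    · exact le_rfl
    · by_contra! h
      exact (hleft p hxp hpm).not_gt
        ((chordSlope_lt_iff_left hxp hpm).mp ((chordSlope_lt_iff_right hxp hpm).mpr h))
  exact fun p y hp hpm hmy hy => (hbefore p hp hpm).trans_lt (hafter y hmy hy)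

/-- If some point between `x` and `z` lay below the edge, the last minimizer of the slope from `x`
would be a vertex in between. -/
theorem le_chordSlope_of_adjacent (hx : IsHullVertex f lo hi x) (hz : IsHullVertex f lo hi z)
    (hlox : lo ≤ x) (hxz : x < z) (hzhi : z ≤ hi)
    (hgap : ∀ v, x < v → v < z → ¬ IsHullVertex f lo hi v) {q : ℕ} (hxq : x < q) (hqz : q < z) :
    chordSlope f x z ≤ chordSlope f x q := by
  set S := Finset.Ioc x z
  obtain ⟨m₀, hm₀, hmin⟩ := S.exists_min_image (chordSlope f x) ⟨z, by simp [S, hxz]⟩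
  set T := S.filter fun q => chordSlope f x q ≤ chordSlope f x m₀
  have hT : T.Nonempty := ⟨m₀, by simp [T, hm₀]⟩
  set m := T.max' hT
  have hmT : m ∈ T := T.max'_mem hT
  simp only [T, S, Finset.mem_filter, Finset.mem_Ioc] at hmT
  have hmin' : ∀ q, x < q → q ≤ z → chordSlope f x m ≤ chordSlope f x q := fun q h₁ h₂ =>
    hmT.2.trans (hmin q (by simp [S, h₁, h₂]))
  rcases hmT.1.2.lt_or_eq with hmz | hmz
  · refine absurd (isHullVertex_of_last_min_chordSlope hx hz hlox hmT.1.1 hmz hzhi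
      (fun q h₁ h₂ => hmin' q h₁ (h₂.trans hmz).le) fun q h₁ h₂ => ?_) (hgap m hmT.1.1 hmz)
    by_contra! h
    have hqT : q ∈ T := by simp [T, S, h₂, hmT.1.1.trans h₁, h.trans hmT.2]
    exact (T.le_max' q hqT).not_gt h₁
  · exact hmz ▸ hmin' q hxq hqz.le

theorem chordSlope_le_of_adjacent (hx : IsHullVertex f lo hi x) (hz : IsHullVertex f lo hi z)
    (hlox : lo ≤ x) (hxz : x < z) (hzhi : z ≤ hi)
    (hgap : ∀ v, x < v → v < z → ¬ IsHullVertex f lo hi v) {m : ℕ} (hm : lo ≤ m) (hmz : m < z) :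
    chordSlope f m z ≤ chordSlope f x z := by
  rcases lt_trichotomy m x with hmx | rfl | hxm
  · exact ((chordSlope_lt_iff_right hmx hxz).mp (hx m z hm hmx hxz hzhi)).le
  · exact le_rfl
  · by_contra! h
    exact (le_chordSlope_of_adjacent hx hz hlox hxz hzhi hgap hxm hmz).not_gt
      ((chordSlope_lt_iff_left hxm hmz).mp ((chordSlope_lt_iff_right hxm hmz).mpr h))

end Edge

structure IsHullEnum (f : ℕ → ℝ) (lo hi K : ℕ) (x : ℕ → ℕ) : Prop where
  strictMonoOn : StrictMonoOn x (Set.Icc 1 K)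
  mem_iff : ∀ v, lo ≤ v ∧ v ≤ hi ∧ IsHullVertex f lo hi v ↔ ∃ t, 1 ≤ t ∧ t ≤ K ∧ x t = v

namespace IsHullEnum

variable {f : ℕ → ℝ} {lo hi K : ℕ} {x : ℕ → ℕ}

theorem of_lt_iff {M : ℕ} (hlo : lo < hi) (hmono : StrictMonoOn x (Set.Icc 1 (M + 1)))
    (hverts : ∀ v, lo ≤ v ∧ v < hi ∧ IsHullVertex f lo hi v ↔ ∃ t, 1 ≤ t ∧ t ≤ M ∧ x t = v)
    (hlast : x (M + 1) = hi) : IsHullEnum f lo hi (M + 1) x := by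
  refine ⟨hmono, fun v => ⟨?_, ?_⟩⟩
  · rintro ⟨hlov, hvhi, hv⟩
    rcases hvhi.lt_or_eq with hvhi | rfl
    · obtain ⟨t, ht₁, htM, rfl⟩ := (hverts v).mp ⟨hlov, hvhi, hv⟩
      exact ⟨t, ht₁, htM.trans (Nat.le_succ M), rfl⟩
    · exact ⟨M + 1, le_add_self, le_rfl, hlast⟩
  · rintro ⟨t, ht₁, htM, rfl⟩
    rcases htM.lt_or_eq with htM | rfl
    · obtain ⟨hlov, hvhi, hv⟩ := (hverts (x t)).mpr ⟨t, ht₁, Nat.lt_succ_iff.mp htM, rfl⟩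
      exact ⟨hlov, hvhi.le, hv⟩
    · exact ⟨hlast ▸ hlo.le, hlast.le, IsHullVertex.of_hi_le hlast.ge⟩

theorem spec (h : IsHullEnum f lo hi K x) {t : ℕ} (ht₁ : 1 ≤ t) (ht₂ : t ≤ K) :
    lo ≤ x t ∧ x t ≤ hi ∧ IsHullVertex f lo hi (x t) :=
  (h.mem_iff (x t)).mpr ⟨t, ht₁, ht₂, rfl⟩

theorem lt_iff_lt (h : IsHullEnum f lo hi K x) {s t : ℕ} (hs₁ : 1 ≤ s) (hs₂ : s ≤ K)
    (ht₁ : 1 ≤ t) (ht₂ : t ≤ K) : x s < x t ↔ s < t :=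
  h.strictMonoOn.lt_iff_lt ⟨hs₁, hs₂⟩ ⟨ht₁, ht₂⟩

theorem apply_one (h : IsHullEnum f lo hi K x) (hlo : lo ≤ hi) : x 1 = lo := by
  obtain ⟨t, ht₁, htK, hxt⟩ := (h.mem_iff lo).mp ⟨le_rfl, hlo, IsHullVertex.of_le_lo le_rfl⟩
  rcases ht₁.lt_or_eq with ht₁ | rfl
  · have := (h.lt_iff_lt le_rfl (by omega) (by omega) htK).mpr ht₁
    have := (h.spec le_rfl (by omega)).1
    omega
  · exact hxt

theorem chordSlope_le (h : IsHullEnum f lo hi K x) {t m : ℕ} (ht₂ : 2 ≤ t) (htK : t ≤ K)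
    (hm : lo ≤ m) (hmt : m < x t) : chordSlope f m (x t) ≤ chordSlope f (x (t - 1)) (x t) := by
  obtain ⟨hlo', -, hprev⟩ := h.spec (t := t - 1) (by omega) (by omega)
  obtain ⟨-, hthi, hcur⟩ := h.spec (t := t) (by omega) htK
  refine chordSlope_le_of_adjacent hprev hcur hlo'
    ((h.lt_iff_lt (by omega) (by omega) (by omega) htK).mpr (by omega)) hthi ?_ hm hmt
  rintro w hw₁ hw₂ hw
  obtain ⟨s, hs₁, hsK, rfl⟩ := (h.mem_iff w).mp ⟨hlo'.trans hw₁.le, (hw₂.trans_le hthi).le, hw⟩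
  have := (h.lt_iff_lt (by omega) (by omega) hs₁ hsK).mp hw₁
  have := (h.lt_iff_lt hs₁ hsK (by omega) htK).mp hw₂
  omega

theorem isHullVertex_succ_iff (h : IsHullEnum f lo hi K x) (hlo : lo ≤ hi) {N : ℕ}
    (hN₁ : 1 ≤ N) (hNK : N ≤ K)
    (hpush : 2 ≤ N → chordSlope f (x (N - 1)) (hi + 1) < chordSlope f (x N) (hi + 1))
    (hpop : ∀ t, N < t → t ≤ K →
      chordSlope f (x t) (hi + 1) ≤ chordSlope f (x (t - 1)) (hi + 1))
    (v : ℕ) :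
    lo ≤ v ∧ v < hi + 1 ∧ IsHullVertex f lo (hi + 1) v ↔ ∃ t, 1 ≤ t ∧ t ≤ N ∧ x t = v := by
  have hNvert : IsHullVertex f lo (hi + 1) (x N) := by
    refine (h.spec hN₁ hNK).2.2.succ fun m hm hmN => ?_
    rcases hN₁.lt_or_eq with hN₂ | rfl
    · have hstep := (h.lt_iff_lt (by omega) (by omega) hN₁ hNK).mpr (Nat.sub_lt hN₁ one_pos)
      exact (h.chordSlope_le hN₂ hNK hm hmN).trans_lt <| (chordSlope_lt_iff_right hstep
        (Nat.lt_succ_of_le (h.spec hN₁ hNK).2.1)).mpr (hpush hN₂)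
    · exact absurd (h.apply_one hlo ▸ hmN) hm.not_gt
  constructor
  · rintro ⟨hlov, hvhi, hv⟩
    obtain ⟨t, ht₁, htK, rfl⟩ :=
      (h.mem_iff v).mp ⟨hlov, Nat.lt_succ_iff.mp hvhi, hv.mono (Nat.le_succ hi)⟩
    refine ⟨t, ht₁, not_lt.mp fun hNt => ?_, rfl⟩
    have hstep := (h.lt_iff_lt (by omega) (by omega) ht₁ htK).mpr (Nat.sub_lt ht₁ one_pos)
    exact (hpop t hNt htK).not_gt ((chordSlope_lt_iff_right hstep hvhi).mp
      (hv _ _ (h.spec (by omega) (by omega)).1 hstep hvhi le_rfl))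
  · rintro ⟨t, ht₁, htN, rfl⟩
    obtain ⟨hlot, hthi, hvt⟩ := h.spec ht₁ (htN.trans hNK)
    refine ⟨hlot, Nat.lt_succ_of_le hthi, ?_⟩
    rcases htN.lt_or_eq with htN | rfl
    · exact hvt.of_lt hNvert ((h.lt_iff_lt ht₁ (by omega) hN₁ hNK).mpr htN) (h.spec hN₁ hNK).2.1
    · exact hNvert

end IsHullEnum

noncomputable def prefixSum (D : ℕ → ℝ) (k : ℕ) : ℝ := ∑ l ∈ Finset.range k, D l

theorem avg_eq_chordSlope (D : ℕ → ℝ) {a c : ℕ} (h : a ≤ c) :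
    avg D a c = chordSlope (prefixSum D) a (c + 1) := by
  rw [avg, chordSlope, prefixSum, prefixSum, ← Finset.sum_Ico_eq_sub _ (by omega),
    Finset.Ico_add_one_right_eq_Icc, Nat.cast_add_one, ← Nat.cast_sub (by omega),
    Nat.sub_add_comm h]
  push_cast; ring

theorem isBorder_iff (D : ℕ → ℝ) (n j : ℕ) :
    IsBorder D n j ↔ 1 ≤ j ∧ j < n + 1 ∧ IsHullVertex (prefixSum D) 1 (n + 1) j := by
  refine and_congr_right fun hj => and_congr Nat.lt_succ_iff.symm ?_
  have hj' : j - 1 + 1 = j := Nat.sub_add_cancel hj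
  simp only [not_exists, not_and, not_le]
  constructor
  · intro h m y hm hmj hjy hyn
    have := h m (y - 1) hm hmj (by omega) (by omega)
    rwa [avg_eq_chordSlope D (by omega), avg_eq_chordSlope D (by omega), hj',
      Nat.sub_add_cancel (by omega)] at this
  · intro h a c ha haj hjc hcn
    rw [avg_eq_chordSlope D (by omega), avg_eq_chordSlope D hjc, hj']
    exact h a (c + 1) ha haj (by omega) (by omega)

/-- Border update: if `b 1 < ⋯ < b M` are the borders of `D[1..i−1]`, `b (M+1) = i`,
and `N` is the maximal integer in `[2, M+1]` with
`avg(D[b (N−1)..i]) < avg(D[b N..i])` (or `N = 1` if none exists), then the borders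
of `D[1..i]` are exactly `b 1, …, b N`. -/
theorem borders_update (D : ℕ → ℝ) (i M N : ℕ) (b : ℕ → ℕ) (hi : 2 ≤ i)
    (hmono : StrictMonoOn b (Finset.Icc 1 (M + 1)))
    (hb : ∀ j, IsBorder D (i - 1) j ↔ ∃ t, 1 ≤ t ∧ t ≤ M ∧ b t = j)
    (hlast : b (M + 1) = i)
    (hN : (2 ≤ N ∧ N ≤ M + 1 ∧ avg D (b (N - 1)) i < avg D (b N) i ∧
            ∀ t, 2 ≤ t → t ≤ M + 1 → avg D (b (t - 1)) i < avg D (b t) i → t ≤ N) ∨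
          (N = 1 ∧ ∀ t, 2 ≤ t → t ≤ M + 1 → ¬ avg D (b (t - 1)) i < avg D (b t) i)) :
    ∀ j, IsBorder D i j ↔ ∃ t, 1 ≤ t ∧ t ≤ N ∧ b t = j := by
  have hi' : i - 1 + 1 = i := by omega
  simp only [isBorder_iff, hi'] at hb ⊢
  have henum := IsHullEnum.of_lt_iff (by omega) (by simpa using hmono) hb hlast
  have havg : ∀ t, 1 ≤ t → t ≤ M + 1 →
      avg D (b t) i = chordSlope (prefixSum D) (b t) (i + 1) := fun t ht₁ ht₂ =>
    avg_eq_chordSlope D (henum.spec ht₁ ht₂).2.1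
  obtain ⟨hN₁, hNM, hpush, hpop⟩ : 1 ≤ N ∧ N ≤ M + 1 ∧
      (2 ≤ N → avg D (b (N - 1)) i < avg D (b N) i) ∧
      ∀ t, N < t → t ≤ M + 1 → ¬ avg D (b (t - 1)) i < avg D (b t) i := by
    rcases hN with ⟨hN₂, hNM, hlt, hmax⟩ | ⟨rfl, hnone⟩
    · exact ⟨by omega, hNM, fun _ => hlt, fun t hNt htM h => (hmax t (by omega) htM h).not_gt hNt⟩
    · exact ⟨le_rfl, by omega, by omega, hnone⟩
  refine henum.isHullVertex_succ_iff (by omega) hN₁ hNM (fun hN₂ => ?_) (fun t hNt htM => ?_)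
  · rw [← havg _ (by omega) (by omega), ← havg _ (by omega) hNM]
    exact hpush hN₂
  · rw [← havg _ (by omega) htM, ← havg _ (by omega) (by omega)]
    exact not_lt.mp (hpop t hNt htM)
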